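/- Let U be the inductive type with constructors nil : U, cons : U → U → U, and const : K → U for an arbitrary index type K. Say u ∈ U is the list [e₁,…,e_n] if u = cons e₁ (cons e₂ (… (cons e_n nil)…)) (for n = 0, u = nil). Let the atom type be A = (U × U) ⊕ (U × U × U), writing atoms as mid(e, l) and mi(e, u, l). Define S_mid = {mid(e, l) | ∃ i ≥ 1, ∃ e₁,…,e_{2i−1} ∈ U, l is the list [e₁,…,e_{2i−1}] and e = e_i} and S_mi = {mi(e, u, l) | ∃ i ≥ 1, ∃ e₁,…,e_i, t ∈ U, u = cons e₁ (cons e₂ (… (cons e_i t)…)) with e = e_i, and ∃ f₁,…,f_{2i−1} ∈ U, l is the list [f₁,…,f_{2i−1}]}. Consider the ground positive program P consisting of: the clauses (mid(e, l), {mi(e, l, l)}) for all e, l ∈ U; the facts (mi(e, cons e t, cons f nil), ∅) for all e, t, f ∈ U; and the clauses (mi(e, cons h u, cons f₁ (cons f₂ l)), {mi(e, u, l)}) for all e, h, u, f₁, f₂, l ∈ U. Then the least Herbrand model of P equals S_mid ∪ S_mi. -/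

import Mathlib

/-- Immediate consequence operator of a ground positive program. -/
def Tq {A : Type*} (Q : Set (A × Finset A)) : Set A →o Set A where
  toFun J := {h | ∃ pos : Finset A, (h, pos) ∈ Q ∧ ↑pos ⊆ J}
  monotone' := by
    intro J K hJK h hh
    obtain ⟨pos, hm, hs⟩ := hh
    exact ⟨pos, hm, hs.trans hJK⟩

/-- Least Herbrand model of a ground positive program: the least fixed point of its
immediate consequence operator. -/
def leastModel {A : Type*} (Q : Set (A × Finset A)) : Set A := OrderHom.lfp (Tq Q)

/-- The Herbrand universe of a language with `nil`, binary `cons`, and additional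
constants indexed by `K`. -/
inductive U (K : Type*) where
  | nil : U K
  | cons : U K → U K → U K
  | const : K → U K

/-- `consAll [x₁,…,x_n] t = cons x₁ (cons x₂ ( … (cons x_n t) …))`. -/
def consAll {K : Type*} (xs : List (U K)) (t : U K) : U K := xs.foldr U.cons t

/-- The term representing the list `[x₁,…,x_n]`. -/
def listToU {K : Type*} (xs : List (U K)) : U K := consAll xs U.nil

/-- Atoms: `mid(e,l)` is `Sum.inl (e,l)`, and `mi(e,u,l)` is `Sum.inr (e,u,l)`. -/
abbrev MAtom (K : Type*) := (U K × U K) ⊕ (U K × U K × U K)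

/-- `S_mid`: atoms `mid(e,l)` where `l` is a list `[e₁,…,e_{2i-1}]` (`i ≥ 1`) and
`e = e_i` is its middle element. -/
def Smid (K : Type*) : Set (MAtom K) :=
  {a | ∃ (e : U K) (xs : List (U K)) (i : ℕ), 1 ≤ i ∧ xs.length = 2 * i - 1 ∧
    xs[i-1]? = some e ∧ a = Sum.inl (e, listToU xs)}

/-- `S_mi`: atoms `mi(e,u,l)` where `u = cons e₁ (… (cons e_i t) …)` with `e = e_i`
(`i ≥ 1`) and `l` is a list of length `2i-1`. -/
def Smi (K : Type*) : Set (MAtom K) :=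
  {a | ∃ (e t : U K) (xs ys : List (U K)) (i : ℕ), 1 ≤ i ∧ xs.length = i ∧
    xs[i-1]? = some e ∧ ys.length = 2 * i - 1 ∧
    a = Sum.inr (e, consAll xs t, listToU ys)}

/-- The ground instantiation of the middle-element program
`{ mid(E,L) ← mi(E,L,L).  mi(E,[E|_],[_]).  mi(E,[_|U],[_,_|L]) ← mi(E,U,L). }`. -/
def MidProg (K : Type*) : Set (MAtom K × Finset (MAtom K)) :=
  {cl | ∃ e l, cl = (Sum.inl (e, l), {Sum.inr (e, l, l)})} ∪
  {cl | ∃ e t f, cl = (Sum.inr (e, U.cons e t, U.cons f U.nil), ∅)} ∪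
  {cl | ∃ e h u f₁ f₂ l,
    cl = (Sum.inr (e, U.cons h u, U.cons f₁ (U.cons f₂ l)), {Sum.inr (e, u, l)})}

/-!
By induction on the half-length `i`, `S_mi` is exactly the set of `mi` atoms generated by the
two `mi` clauses (a fact adds `i = 1`, the recursive clause goes from `i` to `i + 1`), so it is
contained in the least model and closed under those clauses. The `mid` clause links
`mi(e, l, l)` and `mid(e, l)`: if `l = cons e₁ (… (cons e_i t) …)` is also the list
`[f₁, …, f_{2i-1}]`, then `e₁ … e_i` is a prefix of it, so `e = e_i` is its middle element.
Hence `S_mid ∪ S_mi` lies in the least model and is a prefixed point of `T_P`.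
-/

section LeastModel

variable {A : Type*} {Q : Set (A × Finset A)}

theorem head_mem_leastModel {h : A} {pos : Finset A} (hQ : (h, pos) ∈ Q)
    (hpos : ↑pos ⊆ leastModel Q) : h ∈ leastModel Q := by
  rw [leastModel, ← OrderHom.map_lfp]
  exact ⟨pos, hQ, hpos⟩

theorem leastModel_subset {S : Set A} (hS : ∀ h pos, (h, pos) ∈ Q → ↑pos ⊆ S → h ∈ S) :
    leastModel Q ⊆ S :=
  OrderHom.lfp_le _ fun _ ⟨pos, hQ, hpos⟩ => hS _ pos hQ hpos

end LeastModel

namespace U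

variable {K : Type*}

theorem consAll_append (xs ys : List (U K)) (t : U K) :
    consAll (xs ++ ys) t = consAll xs (consAll ys t) :=
  List.foldr_append

theorem prefix_of_consAll_eq {xs ys : List (U K)} {t s : U K} (hlen : xs.length ≤ ys.length)
    (h : consAll xs t = consAll ys s) : xs <+: ys := by
  induction xs generalizing ys with
  | nil => exact List.nil_prefix
  | cons x xs ih =>
    cases ys with
    | nil => simp at hlen
    | cons y ys =>
      obtain ⟨rfl, htail⟩ : x = y ∧ consAll xs t = consAll ys s := U.cons.inj h
      exact (List.prefix_cons_inj x).2 (ih (Nat.le_of_succ_le_succ hlen) htail)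

end U

section MidProg

variable {K : Type*}

theorem inr_mem_Smi_base (e t f : U K) :
    (Sum.inr (e, U.cons e t, U.cons f U.nil) : MAtom K) ∈ Smi K :=
  ⟨e, t, [e], [f], 1, le_rfl, rfl, rfl, rfl, rfl⟩

theorem inr_mem_Smi_step {e u l : U K} (h f₁ f₂ : U K)
    (hmem : (Sum.inr (e, u, l) : MAtom K) ∈ Smi K) :
    (Sum.inr (e, U.cons h u, U.cons f₁ (U.cons f₂ l)) : MAtom K) ∈ Smi K := by
  obtain ⟨e, t, xs, ys, i, hi, hxs, hget, hys, heq⟩ := hmem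
  simp only [Sum.inr.injEq, Prod.mk.injEq] at heq
  obtain ⟨rfl, rfl, rfl⟩ := heq
  refine ⟨e, t, h :: xs, f₁ :: f₂ :: ys, i + 1, by omega, by simp [hxs], ?_,
    by simp only [List.length_cons]; omega, rfl⟩
  rwa [show i + 1 - 1 = (i - 1) + 1 by omega, List.getElem?_cons_succ]

theorem Smi.induction {motive : U K → U K → U K → Prop}
    (base : ∀ e t f, motive e (U.cons e t) (U.cons f U.nil))
    (step : ∀ e h u f₁ f₂ l, motive e u l → motive e (U.cons h u) (U.cons f₁ (U.cons f₂ l)))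
    {e u l : U K} (hmem : (Sum.inr (e, u, l) : MAtom K) ∈ Smi K) : motive e u l := by
  obtain ⟨e, t, xs, ys, i, hi, hxs, hget, hys, heq⟩ := hmem
  simp only [Sum.inr.injEq, Prod.mk.injEq] at heq
  obtain ⟨rfl, rfl, rfl⟩ := heq
  induction i generalizing xs ys with
  | zero => omega
  | succ i ih =>
    obtain _ | ⟨x, xs⟩ := xs
    · simp at hxs
    obtain _ | ⟨f₁, _ | ⟨f₂, ys⟩⟩ := ys
    · simp only [List.length_nil] at hys; omega
    · obtain rfl : i = 0 := by simp only [List.length_singleton] at hys; omega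
      obtain rfl : xs = [] := by simpa using hxs
      obtain rfl : x = e := by simpa using hget
      exact base x t f₁
    · simp only [List.length_cons] at hxs hys
      rw [show i + 1 - 1 = (i - 1) + 1 by omega, List.getElem?_cons_succ] at hget
      exact step e x _ f₁ f₂ _ (ih xs ys (by omega) (by omega) (by omega) hget)

/-- Witness: split `l` after its middle element, `u = consAll (take i) (consAll (drop i) nil)`. -/
theorem inr_mem_Smi_of_inl_mem_Smid {e l : U K} (hmem : (Sum.inl (e, l) : MAtom K) ∈ Smid K) :
    (Sum.inr (e, l, l) : MAtom K) ∈ Smi K := by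
  obtain ⟨e, ys, i, hi, hys, hget, heq⟩ := hmem
  simp only [Sum.inl.injEq, Prod.mk.injEq] at heq
  obtain ⟨rfl, rfl⟩ := heq
  refine ⟨e, consAll (ys.drop i) U.nil, ys.take i, ys, i, hi,
    by simp only [List.length_take]; omega, ?_, hys, ?_⟩
  · rwa [List.getElem?_take_of_lt (by omega)]
  · rw [← U.consAll_append, List.take_append_drop, listToU]

theorem inl_mem_Smid_of_inr_mem_Smi {e l : U K} (hmem : (Sum.inr (e, l, l) : MAtom K) ∈ Smi K) :
    (Sum.inl (e, l) : MAtom K) ∈ Smid K := by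
  obtain ⟨e, t, xs, ys, i, hi, hxs, hget, hys, heq⟩ := hmem
  simp only [Sum.inr.injEq, Prod.mk.injEq] at heq
  obtain ⟨rfl, hl, rfl⟩ := heq
  obtain ⟨r, rfl⟩ := U.prefix_of_consAll_eq (by omega) hl.symm
  refine ⟨e, xs ++ r, i, hi, hys, ?_, rfl⟩
  rwa [List.getElem?_append_left (by omega)]

theorem Smi_subset_leastModel : Smi K ⊆ leastModel (MidProg K) := by
  intro a hmem
  obtain ⟨e, _, _, _, _, _, _, _, _, rfl⟩ := id hmem
  refine Smi.induction (motive := fun e u l => (Sum.inr (e, u, l) : MAtom K) ∈ _)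
    (fun e t f => head_mem_leastModel (Or.inl (Or.inr ⟨e, t, f, rfl⟩)) (by simp))
    (fun e h u f₁ f₂ l ih => head_mem_leastModel
      (Or.inr ⟨e, h, u, f₁, f₂, l, rfl⟩) (by simpa using ih)) hmem

theorem Smid_subset_leastModel : Smid K ⊆ leastModel (MidProg K) := by
  intro a hmem
  obtain ⟨e, _, _, _, _, _, rfl⟩ := id hmem
  exact head_mem_leastModel (Or.inl (Or.inl ⟨e, _, rfl⟩))
    (by simpa using Smi_subset_leastModel (inr_mem_Smi_of_inl_mem_Smid hmem))

theorem leastModel_MidProg_subset : leastModel (MidProg K) ⊆ Smid K ∪ Smi K := by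
  have mi_mem_Smi {e u l : U K} (hmem : (Sum.inr (e, u, l) : MAtom K) ∈ Smid K ∪ Smi K) :
      (Sum.inr (e, u, l) : MAtom K) ∈ Smi K :=
    hmem.resolve_left fun ⟨_, _, _, _, _, _, h⟩ => Sum.inr_ne_inl h
  refine leastModel_subset ?_
  rintro _ _ ((⟨e, l, heq⟩ | ⟨e, t, f, heq⟩) | ⟨e, h, u, f₁, f₂, l, heq⟩) hbody <;>
    obtain ⟨rfl, rfl⟩ := Prod.mk.inj heq
  · exact Or.inl (inl_mem_Smid_of_inr_mem_Smi (mi_mem_Smi (by simpa using hbody)))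
  · exact Or.inr (inr_mem_Smi_base e t f)
  · exact Or.inr (inr_mem_Smi_step h f₁ f₂ (mi_mem_Smi (by simpa using hbody)))

end MidProg

/-- Example 3 of the paper: the least Herbrand model of the middle-element program is
exactly `S_mid ∪ S_mi`. -/
theorem midProg_fully_correct (K : Type*) :
    leastModel (MidProg K) = Smid K ∪ Smi K :=
  leastModel_MidProg_subset.antisymm
    (Set.union_subset Smid_subset_leastModel Smi_subset_leastModel)
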